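/- arXiv:1910.03572 — 9 statements merged into one kernel-verified Lean document; each statement's English description precedes it below -/
import Mathlib

section
/- Every Janet divisor relation implies Janet-like divisibility: if U is a finite set of monomials, t ∈ U, and u = t·v where every variable dividing v is Janet-multiplicative for t with respect to U, then v is not divisible by any Janet-like nonmultiplicative power of t, i.e., t is a Janet-like divisor of u. -/
variable {n : ℕ}

/-- `x_i` is Janet-multiplicative for `t` with respect to `U`. -/
def JanetMult (U : Finset (Fin n → ℕ)) (t : Fin n → ℕ) (i : Fin n) : Prop :=
  ¬ ∃ v ∈ U, (∀ j, i < j → v j = t j) ∧ t i < v i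

/-- `h_i(t,U) = max{deg_i v : v ∈ U, deg_j v = deg_j t ∀ j > i} - deg_i t`. -/
def hdeg (U : Finset (Fin n → ℕ)) (t : Fin n → ℕ) (i : Fin n) : ℕ :=
  (U.filter (fun v => ∀ j, i < j → v j = t j)).sup (fun v => v i) - t i

/-- `x_i^k` is the Janet-like nonmultiplicative power of `t` w.r.t. `U`. -/
def isNMP (U : Finset (Fin n → ℕ)) (t : Fin n → ℕ) (i : Fin n) (k : ℕ) : Prop :=
  IsLeast {d | ∃ v ∈ U, (∀ j, i < j → v j = t j) ∧ t i < v i ∧ d = v i - t i} k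

/-- `t` Janet-like divides `w` w.r.t. `U`: `t | w` and the quotient is not
divisible by any nonmultiplicative power of `t`. -/
def JLdiv (U : Finset (Fin n → ℕ)) (t w : Fin n → ℕ) : Prop :=
  (∀ j, t j ≤ w j) ∧ ∀ i k, isNMP U t i k → w i - t i < k

theorem stmt2 (U : Finset (Fin n → ℕ)) (t u v : Fin n → ℕ) (ht : t ∈ U)
    (hu : u = t + v) (hmult : ∀ j, v j ≠ 0 → JanetMult U t j) :
    (∀ i k, isNMP U t i k → v i < k) ∧ JLdiv U t u := by
  have key : ∀ i k, isNMP U t i k → v i < k := by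
    intro i k hk
    obtain ⟨⟨w, hwU, hwj, hwi, hwk⟩, _⟩ := hk
    have hvi : v i = 0 := by
      by_contra h
      exact hmult i h ⟨w, hwU, hwj, hwi⟩
    omega
  refine ⟨key, fun j => by simp [hu], fun i k hk => ?_⟩
  have := key i k hk
  have : u i = t i + v i := by simp [hu]
  omega
end

section
/- Janet division cones are disjoint: if U is a finite set of monomials and t, t' ∈ U with t ≠ t', then the Janet cones C_J(t,U) and C_J(t',U) are disjoint, i.e., no monomial u has two distinct Janet divisors in U. -/
variable {n : ℕ}

theorem stmt4 (U : Finset (Fin n → ℕ)) (t t' : Fin n → ℕ) (ht : t ∈ U)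
    (ht' : t' ∈ U) (hne : t ≠ t') (u : Fin n → ℕ)
    (h1 : ∃ lam : Fin n → ℕ, u = t + lam ∧ ∀ j, lam j ≠ 0 → JanetMult U t j)
    (h2 : ∃ lam : Fin n → ℕ, u = t' + lam ∧ ∀ j, lam j ≠ 0 → JanetMult U t' j) :
    False := by
  obtain ⟨lam, hu, hm⟩ := h1
  obtain ⟨lam', hu', hm'⟩ := h2
  have hne' : ∃ i, t i ≠ t' i := Function.ne_iff.mp hne
  set s := Finset.univ.filter (fun i => t i ≠ t' i) with hs
  have hsne : s.Nonempty := ⟨hne'.choose, by simp [hs, hne'.choose_spec]⟩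
  set j := s.max' hsne with hj
  have hjs : t j ≠ t' j := by have := s.max'_mem hsne; simpa [hs] using this
  have hgt : ∀ l, j < l → t l = t' l := by
    intro l hl
    by_contra h
    exact absurd (s.le_max' l (by simp [hs, h])) (not_le.mpr hl)
  have key : ∀ (a b : Fin n → ℕ) (la lb : Fin n → ℕ),
      a ∈ U → b ∈ U → u = a + la → u = b + lb →
      (∀ j, la j ≠ 0 → JanetMult U a j) →
      (∀ l, j < l → b l = a l) → a j < b j → False := by
    intro a b la lb haU hbU hua hub hma hlb hab
    have hla : la j ≠ 0 := by
      have e1 : u j = a j + la j := by rw [hua]; rfl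
      have e2 : u j = b j + lb j := by rw [hub]; rfl
      omega
    exact hma j hla ⟨b, hbU, hlb, hab⟩
  rcases lt_or_gt_of_ne hjs with h | h
  · exact key t t' lam lam' ht ht' hu hu' hm (fun l hl => (hgt l hl).symm) h
  · exact key t' t lam' lam ht' ht hu' hu hm' (fun l hl => hgt l hl) h
end

section
/- Janet-like divisors are unique: if U is a finite set of monomials, then any monomial w has at most one Janet-like divisor in U. -/
variable {n : ℕ}

lemma stmt5_aux (U : Finset (Fin n → ℕ)) (s s' w : Fin n → ℕ)
    (hs' : s' ∈ U) (h1 : JLdiv U s w) (h2 : JLdiv U s' w) (i : Fin n)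
    (hagree : ∀ j, i < j → s' j = s j) (hlt : s i < s' i) : False := by
  set S : Set ℕ := {d | ∃ v ∈ U, (∀ j, i < j → v j = s j) ∧ s i < v i ∧ d = v i - s i}
  have hmem : (s' i - s i) ∈ S := ⟨s', hs', hagree, hlt, rfl⟩
  have hk : isNMP U s i (sInf S) :=
    ⟨Nat.sInf_mem ⟨_, hmem⟩, fun d hd => Nat.sInf_le hd⟩
  have hwk := h1.2 i _ hk
  have h3 : sInf S ≤ s' i - s i := Nat.sInf_le hmem
  have h4 : s' i ≤ w i := h2.1 i
  omega

theorem stmt5 (U : Finset (Fin n → ℕ)) (s s' w : Fin n → ℕ) (hs : s ∈ U)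
    (hs' : s' ∈ U) (h1 : JLdiv U s w) (h2 : JLdiv U s' w) : s = s' := by
  by_contra hne
  have hT : (Finset.univ.filter (fun j => s j ≠ s' j)).Nonempty := by
    by_contra h
    apply hne
    funext j
    by_contra hj
    exact h ⟨j, Finset.mem_filter.2 ⟨Finset.mem_univ j, hj⟩⟩
  set i := (Finset.univ.filter (fun j => s j ≠ s' j)).max' hT with hi
  have hiT := (Finset.univ.filter (fun j => s j ≠ s' j)).max'_mem hT
  have hine : s i ≠ s' i := (Finset.mem_filter.1 hiT).2
  have hagree : ∀ j, i < j → s j = s' j := by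
    intro j hj
    by_contra hjne
    exact absurd (Finset.le_max' _ j (Finset.mem_filter.2 ⟨Finset.mem_univ j, hjne⟩))
      (not_le.2 hj)
  rcases lt_or_gt_of_ne hine with h | h
  · exact stmt5_aux U s s' w hs' h1 h2 i (fun j hj => (hagree j hj).symm) h
  · exact stmt5_aux U s' s w hs h2 h1 i (fun j hj => hagree j hj) h
end

section
/- For a monomial ideal I with order ideal complement N(I), the star set F(I) = { x^γ ∉ N(I) : x^γ / min(x^γ) ∈ N(I) } generates I, where min(x^γ) denotes the smallest variable dividing x^γ. -/
variable {n : ℕ}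

lemma aux9 (I : Set (Fin n → ℕ)) (hproper : (0 : Fin n → ℕ) ∉ I) :
    ∀ N : ℕ, ∀ u : Fin n → ℕ, (∑ j, u j) ≤ N → u ∈ I →
      ∃ f : Fin n → ℕ,
        (f ∈ I ∧ ∃ k : Fin n, 0 < f k ∧ (∀ j, j < k → f j = 0) ∧
          Function.update f k (f k - 1) ∉ I) ∧ ∀ j, f j ≤ u j := by
  intro N
  induction N with
  | zero =>
      intro u hsum hu
      exfalso
      have : u = 0 := by
        funext j
        have := Finset.sum_eq_zero_iff.mp (Nat.le_zero.mp hsum) j (Finset.mem_univ j)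
        simpa using this
      exact hproper (this ▸ hu)
  | succ N ih =>
      intro u hsum hu
      -- u ≠ 0
      have hune : u ≠ 0 := by rintro rfl; exact hproper hu
      have hex : ∃ i, 0 < u i := by
        by_contra h
        push_neg at h
        exact hune (funext fun j => Nat.le_zero.mp (h j))
      -- least index k with u k > 0
      set S := Finset.univ.filter (fun i => 0 < u i) with hS
      have hSne : S.Nonempty := by
        obtain ⟨i, hi⟩ := hex
        exact ⟨i, by simp [hS, hi]⟩
      set k := S.min' hSne with hk
      have hks : 0 < u k := by
        have := S.min'_mem hSne
        simpa [hS] using this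
      have hkmin : ∀ j, j < k → u j = 0 := by
        intro j hj
        by_contra h
        have : j ∈ S := by simp [hS, Nat.pos_of_ne_zero h]
        exact absurd (S.min'_le j this) (not_le.mpr hj)
      set u' := Function.update u k (u k - 1) with hu'
      by_cases hmem : u' ∈ I
      · have hsum' : (∑ j, u' j) ≤ N := by
          have h1 : ∑ j, u' j = (u k - 1) + ∑ j ∈ Finset.univ \ {k}, u j := by
            rw [hu', Finset.sum_update_of_mem (Finset.mem_univ k)]
          have h2 : ∑ j, u j = u k + ∑ j ∈ Finset.univ \ {k}, u j :=
            Finset.sum_eq_add_sum_sdiff_singleton_of_mem (Finset.mem_univ k) u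
          omega
        obtain ⟨f, hf, hle⟩ := ih u' hsum' hmem
        refine ⟨f, hf, fun j => le_trans (hle j) ?_⟩
        by_cases hjk : j = k
        · subst hjk; simp [hu']
        · simp [hu', Function.update_of_ne hjk]
      · exact ⟨u, ⟨hu, k, hks, hkmin, hmem⟩, fun j => le_rfl⟩

theorem stmt9 (I : Set (Fin n → ℕ)) (hI : ∀ t ∈ I, ∀ s : Fin n → ℕ, t + s ∈ I)
    (hproper : (0 : Fin n → ℕ) ∉ I) :
    (∀ t : Fin n → ℕ,
        (t ∈ I ∧ ∃ k : Fin n, 0 < t k ∧ (∀ j, j < k → t j = 0) ∧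
          Function.update t k (t k - 1) ∉ I) → t ∈ I) ∧
    (∀ u ∈ I, ∃ f : Fin n → ℕ,
        (f ∈ I ∧ ∃ k : Fin n, 0 < f k ∧ (∀ j, j < k → f j = 0) ∧
          Function.update f k (f k - 1) ∉ I) ∧ ∀ j, f j ≤ u j) := by
  refine ⟨fun t ht => ht.1, fun u hu => aux9 I hproper (∑ j, u j) u le_rfl hu⟩
end

section
/- If U is a finite complete set of monomials with respect to Janet-like division, then every monomial in the semigroup ideal generated by U has exactly one Janet-like divisor in U. -/
variable {n : ℕ}

/-- Key lemma: two distinct JL-divisors of `w` in `U` give a contradiction. -/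
lemma jl_unique_aux (U : Finset (Fin n → ℕ)) (w a b : Fin n → ℕ)
    (ha : a ∈ U) (hb : b ∈ U) (hda : JLdiv U a w) (hdb : JLdiv U b w)
    (i : Fin n) (hj : ∀ j, i < j → b j = a j) (hi : a i < b i) : False := by
  set S : Set ℕ := {d | ∃ v ∈ U, (∀ j, i < j → v j = a j) ∧ a i < v i ∧ d = v i - a i}
  have hmem : b i - a i ∈ S := ⟨b, hb, hj, hi, rfl⟩
  have hne : S.Nonempty := ⟨_, hmem⟩
  have hleast : isNMP U a i (sInf S) := ⟨Nat.sInf_mem hne, fun d hd => Nat.sInf_le hd⟩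
  have h1 : w i - a i < sInf S := hda.2 i _ hleast
  have h2 : sInf S ≤ b i - a i := Nat.sInf_le hmem
  have h3 : b i - a i ≤ w i - a i := Nat.sub_le_sub_right (hdb.1 i) _
  omega

theorem stmt11 (U : Finset (Fin n → ℕ))
    (hcomp : ∀ u ∈ U, ∀ v : Fin n → ℕ, ∃ s ∈ U, JLdiv U s (u + v))
    (w : Fin n → ℕ) (hw : ∃ u ∈ U, ∀ j, u j ≤ w j) :
    ∃! s : Fin n → ℕ, s ∈ U ∧ JLdiv U s w := by
  obtain ⟨u, hu, huw⟩ := hw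
  obtain ⟨s, hs, hsd⟩ := hcomp u hu (w - u)
  have hwe : u + (w - u) = w := by
    funext j
    have := huw j
    simp only [Pi.add_apply, Pi.sub_apply]
    omega
  rw [hwe] at hsd
  refine ⟨s, ⟨hs, hsd⟩, ?_⟩
  rintro t ⟨ht, htd⟩
  by_contra hne
  have hF : (Finset.univ.filter (fun i => t i ≠ s i)).Nonempty := by
    by_contra h
    apply hne
    funext j
    by_contra hj
    exact h ⟨j, Finset.mem_filter.mpr ⟨Finset.mem_univ j, hj⟩⟩
  set i := (Finset.univ.filter (fun i => t i ≠ s i)).max' hF with hi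
  have hiF := (Finset.univ.filter (fun i => t i ≠ s i)).max'_mem hF
  have hits : t i ≠ s i := (Finset.mem_filter.mp hiF).2
  have hgt : ∀ j, i < j → t j = s j := by
    intro j hij
    by_contra hj
    exact absurd (Finset.le_max' _ j (Finset.mem_filter.mpr ⟨Finset.mem_univ j, hj⟩))
      (not_le.mpr hij)
  rcases lt_or_gt_of_ne hits with h | h
  · exact jl_unique_aux U w t s ht hs htd hsd i (fun j hij => (hgt j hij).symm) h
  · exact jl_unique_aux U w s t hs ht hsd htd i hgt h
end

section
/- Local completeness criterion for Janet-like division: a finite set U of monomials is complete w.r.t. Janet-like division if and only if for every u ∈ U and every nonmultiplicative power p ∈ NMP(u,U), the monomial u·p has a Janet-like divisor in U. -/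
/-! Among the elements of `U` dividing `w`, take the greatest one `u` in the colexicographic
order. If some nonmultiplicative power `x_i^k` of `u` divided `w / u`, a Janet-like divisor `s`
of `u·x_i^k` would, by the Janet-like conditions, have to agree with the witness `v` of that power
in every degree `≥ i`; so `s` divides `w` and is colexicographically larger than `u`. -/

variable {n : ℕ}

theorem exists_isNMP_le {U : Finset (Fin n → ℕ)} {t v : Fin n → ℕ} {i : Fin n} (hv : v ∈ U)
    (hvt : ∀ j, i < j → v j = t j) (hlt : t i < v i) : ∃ k ≤ v i - t i, isNMP U t i k :=
  have hmem : v i - t i ∈ {d | ∃ v ∈ U, (∀ j, i < j → v j = t j) ∧ t i < v i ∧ d = v i - t i} :=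
    ⟨v, hv, hvt, hlt, rfl⟩
  ⟨sInf _, Nat.sInf_le hmem, Nat.sInf_mem ⟨_, hmem⟩, fun _ hd => Nat.sInf_le hd⟩

namespace JLdiv

variable {U : Finset (Fin n → ℕ)} {s w v : Fin n → ℕ}

theorem apply_lt_of_mem (h : JLdiv U s w) {i : Fin n} (hv : v ∈ U)
    (hvs : ∀ j, i < j → v j = s j) (hlt : s i < v i) : w i < v i := by
  obtain ⟨k, hk, hnmp⟩ := exists_isNMP_le hv hvs hlt
  have := h.2 i k hnmp
  omega

theorem apply_eq_of_forall_ge (h : JLdiv U s w) {i : Fin n} (hv : v ∈ U)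
    (hwv : ∀ j, i ≤ j → w j = v j) : ∀ j, i ≤ j → s j = v j := by
  intro j
  -- downward induction: `s j < v j` would make `v` a nonmultiplicative witness of `s` at `j`
  induction j using WellFoundedGT.induction with
  | _ j ih =>
    intro hij
    have hsv : s j ≤ v j := hwv j hij ▸ h.1 j
    refine hsv.eq_or_lt.resolve_right fun hlt => ?_
    have hvs : ∀ l, j < l → v l = s l := fun l hl => (ih l hl (hij.trans hl.le)).symm
    exact (h.apply_lt_of_mem hv hvs hlt).ne (hwv j hij)

end JLdiv

theorem exists_JLdiv_of_forall_isNMP {U : Finset (Fin n → ℕ)}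
    (hloc : ∀ u ∈ U, ∀ i k, isNMP U u i k → ∃ s ∈ U, JLdiv U s (u + Pi.single i k))
    {w : Fin n → ℕ} (hw : ∃ u ∈ U, ∀ j, u j ≤ w j) : ∃ s ∈ U, JLdiv U s w := by
  obtain ⟨u, hu, hmax⟩ := (U.filter fun t => ∀ j, t j ≤ w j).exists_max_image toColex
    (by simpa [Finset.Nonempty] using hw)
  rw [Finset.mem_filter] at hu
  refine ⟨u, hu.1, hu.2, fun i k hnmp => Nat.lt_of_not_le fun hk => ?_⟩
  obtain ⟨s, hsU, hs⟩ := hloc u hu.1 i k hnmp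
  obtain ⟨v, hvU, hvu, hlt, rfl⟩ := hnmp.1
  set t := u + Pi.single i (v i - u i)
  have htv : ∀ j, i ≤ j → t j = v j := fun j hij => by
    rcases hij.lt_or_eq with hij | rfl
    · simp [t, Pi.single_eq_of_ne hij.ne', hvu j hij]
    · simp only [t, Pi.add_apply, Pi.single_eq_same]
      omega
  have htw : ∀ j, t j ≤ w j := fun j => by
    rcases eq_or_ne j i with rfl | hji
    · simp only [t, Pi.add_apply, Pi.single_eq_same]
      omega
    · simpa [t, Pi.single_eq_of_ne hji] using hu.2 j
  have hsv := hs.apply_eq_of_forall_ge hvU htv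
  have hsw : ∀ j, s j ≤ w j := fun j => (hs.1 j).trans (htw j)
  have hsu : s i ≤ u i := Pi.apply_le_of_toColex (hmax s (Finset.mem_filter.2 ⟨hsU, hsw⟩))
    fun j hij => (hsv j hij.le).trans (hvu j hij)
  have hsi : s i = v i := hsv i le_rfl
  omega

theorem stmt12 (U : Finset (Fin n → ℕ)) :
    (∀ u ∈ U, ∀ v : Fin n → ℕ, ∃ s ∈ U, JLdiv U s (u + v)) ↔
      (∀ u ∈ U, ∀ i k, isNMP U u i k → ∃ s ∈ U, JLdiv U s (u + Pi.single i k)) :=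
  ⟨fun h u hu i k _ => h u hu (Pi.single i k),
    fun h u hu v => exists_JLdiv_of_forall_isNMP h ⟨u, hu, fun _ => Nat.le_add_right _ _⟩⟩
end

section
/- If s ∈ U is a Janet-like divisor of p·t, where t ∈ U, p = x_i^{k_i} ∈ NMP(t,U), then deg_j(s) = deg_j(t) for all j > i and deg_i(s) = deg_i(t) + k_i. -/
variable {n : ℕ}

theorem stmt13 (U : Finset (Fin n → ℕ)) (t s : Fin n → ℕ) (ht : t ∈ U) (hs : s ∈ U)
    (i : Fin n) (k : ℕ) (hk : isNMP U t i k) (hd : JLdiv U s (t + Pi.single i k)) :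
    (∀ j, i < j → s j = t j) ∧ s i = t i + k := by
  obtain ⟨⟨v, hvU, hvj, hvi, hvk⟩, _⟩ := hk
  obtain ⟨hle, hnmp⟩ := hd
  set w := t + Pi.single i k with hw
  have hwj : ∀ j, j ≠ i → w j = t j := fun j hj => by
    simp [hw, Pi.single_eq_of_ne hj]
  have hwi : w i = t i + k := by simp [hw]
  have hvk' : v i = t i + k := by omega
  by_contra hcon
  have hex : ∃ j : Fin n, i ≤ j ∧ s j < w j := by
    push_neg at hcon
    by_cases h1 : ∀ j, i < j → s j = t j
    · have h2 : s i ≠ t i + k := hcon h1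
      exact ⟨i, le_refl i, lt_of_le_of_ne (hle i) (by rw [hwi]; exact h2)⟩
    · push_neg at h1
      obtain ⟨j, hij, hne⟩ := h1
      exact ⟨j, le_of_lt hij,
        lt_of_le_of_ne (hle j) (by rw [hwj j (ne_of_gt hij)]; exact hne)⟩
  classical
  set F : Finset (Fin n) := Finset.univ.filter (fun j => i ≤ j ∧ s j < w j) with hF
  have hFne : F.Nonempty := by
    obtain ⟨j, h1, h2⟩ := hex
    exact ⟨j, by simp [hF, h1, h2]⟩
  set J := F.max' hFne with hJ
  have hJmem : i ≤ J ∧ s J < w J := by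
    have := F.max'_mem hFne
    simpa [hF] using this
  have habove : ∀ j, J < j → s j = w j := by
    intro j hj
    have hij : i ≤ j := le_trans hJmem.1 (le_of_lt hj)
    by_contra hne
    have hjF : j ∈ F := by
      simp [hF, hij, lt_of_le_of_ne (hle j) hne]
    exact absurd (F.le_max' j hjF) (not_le.mpr hj)
  -- witness for NMP of s at index J
  set S : Set ℕ := {d | ∃ v ∈ U, (∀ j, J < j → v j = s j) ∧ s J < v J ∧ d = v J - s J}
    with hS
  have hwit : (w J - s J) ∈ S := by
    rcases eq_or_lt_of_le hJmem.1 with heq | hlt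
    · -- J = i, use v
      refine ⟨v, hvU, ?_, ?_, ?_⟩
      · intro j hj
        have hij : i < j := heq ▸ hj
        rw [hvj j hij, ← hwj j (ne_of_gt hij), habove j hj]
      · rw [← heq] at hJmem ⊢
        rw [hvk', ← hwi]; exact hJmem.2
      · rw [← heq, hvk', ← hwi]
    · -- i < J, use t
      refine ⟨t, ht, ?_, ?_, ?_⟩
      · intro j hj
        have hji : j ≠ i := ne_of_gt (lt_trans hlt hj)
        rw [← hwj j hji, habove j hj]
      · rw [hwj J (ne_of_gt hlt)] at hJmem; exact hJmem.2
      · rw [hwj J (ne_of_gt hlt)]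
  have hSne : S.Nonempty := ⟨_, hwit⟩
  have hleast : isNMP U s J (sInf S) :=
    ⟨Nat.sInf_mem hSne, fun d hd => Nat.sInf_le hd⟩
  have h1 := hnmp J (sInf S) hleast
  have h2 := Nat.sInf_le hwit
  omega
end

section
/- If s ∈ U divides p·t (ordinary divisibility), where t ∈ U, p = x_i^{k_i} ∈ NMP(t,U), and deg_j(s) = deg_j(t) for all j ≥ i, then s does not Janet-like divide p·t. -/
variable {n : ℕ}

theorem stmt14 (U : Finset (Fin n → ℕ)) (t s : Fin n → ℕ) (ht : t ∈ U) (hs : s ∈ U)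
    (i : Fin n) (k : ℕ) (hk : isNMP U t i k)
    (hdiv : ∀ j, s j ≤ (t + Pi.single i k : Fin n → ℕ) j) (heq : ∀ j, i ≤ j → s j = t j) :
    ¬ JLdiv U s (t + Pi.single i k) := by
  intro hJ
  have hsi : s i = t i := heq i le_rfl
  have hnmp : isNMP U s i k := by
    obtain ⟨⟨v, hv, hvj, hvi, hvd⟩, hlb⟩ := hk
    constructor
    · exact ⟨v, hv, fun j hj => (hvj j hj).trans (heq j hj.le).symm,
        by rw [hsi]; exact hvi, by rw [hsi]; exact hvd⟩
    · rintro d ⟨v', hv', hvj', hvi', hvd'⟩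
      exact hlb ⟨v', hv', fun j hj => (hvj' j hj).trans (heq j hj.le),
        by rwa [hsi] at hvi', by rwa [hsi] at hvd'⟩
  have h2 := hJ.2 i k hnmp
  have hw : (t + Pi.single i k : Fin n → ℕ) i = t i + k := by simp
  rw [hw, hsi] at h2
  have hvi : t i < t i + k := by
    obtain ⟨⟨v, hv, hvj, hvi, hvd⟩, -⟩ := hk
    omega
  omega
end

section
/- If s ∈ U ordinary-divides p·t with t ∈ U, p = x_i^{k_i} ∈ NMP(t,U), and s <_Lex t with deg_j(s) = deg_j(t) for all j > k and deg_k(s) < deg_k(t) for some k ≥ i, then x_k is Janet-nonmultiplicative for s w.r.t. U and the nonmultiplicative power x_k^{h_k} of s satisfies h_k ≤ deg_k(t) − deg_k(s); consequently s does not Janet-like divide p·t. -/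
variable {n : ℕ}

theorem stmt15 (U : Finset (Fin n → ℕ)) (t s : Fin n → ℕ) (ht : t ∈ U) (hs : s ∈ U)
    (i : Fin n) (ki : ℕ) (hki : isNMP U t i ki)
    (hdiv : ∀ j, s j ≤ (t + Pi.single i ki : Fin n → ℕ) j)
    (m : Fin n) (him : i ≤ m) (hhigh : ∀ j, m < j → s j = t j) (hlt : s m < t m) :
    ¬ JanetMult U s m ∧ (∀ h, isNMP U s m h → h ≤ t m - s m) ∧
      ¬ JLdiv U s (t + Pi.single i ki) := by
  have hmem : (t m - s m) ∈ {d | ∃ v ∈ U, (∀ j, m < j → v j = s j) ∧ s m < v m ∧ d = v m - s m} :=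
    ⟨t, ht, fun j hj => (hhigh j hj).symm, hlt, rfl⟩
  refine ⟨fun h => h ⟨t, ht, fun j hj => (hhigh j hj).symm, hlt⟩,
    fun h hh => hh.2 hmem, fun hJL => ?_⟩
  have hne : {d | ∃ v ∈ U, (∀ j, m < j → v j = s j) ∧ s m < v m ∧ d = v m - s m}.Nonempty :=
    ⟨_, hmem⟩
  have hleast : isNMP U s m (sInf {d | ∃ v ∈ U, (∀ j, m < j → v j = s j) ∧ s m < v m ∧ d = v m - s m}) :=
    ⟨Nat.sInf_mem hne, fun d hd => Nat.sInf_le hd⟩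
  have h1 := hJL.2 m _ hleast
  have h2 : sInf {d | ∃ v ∈ U, (∀ j, m < j → v j = s j) ∧ s m < v m ∧ d = v m - s m} ≤ t m - s m :=
    Nat.sInf_le hmem
  have h3 : t m ≤ (t + Pi.single i ki : Fin n → ℕ) m := le_add_right (le_refl _)
  exact absurd (lt_of_lt_of_le h1 (h2.trans (Nat.sub_le_sub_right h3 _))) (lt_irrefl _)
end
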